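/- arXiv:2001.04310 — 2 statements merged into one kernel-verified Lean document; each statement's English description precedes it below -/
import Mathlib

section
/- Let R be an integral domain and M a finitely generated R-module. An element m ∈ M is torsion over R if and only if h(m) = 0 for every R-linear map h : M → R. -/
/-- Let `R` be an integral domain and `M` a finitely generated `R`-module. An element
`m ∈ M` is torsion over `R` if and only if `h m = 0` for every `R`-linear map `h : M → R`. -/
theorem stmt_0 {R M : Type*} [CommRing R] [IsDomain R] [AddCommGroup M] [Module R M]
    [Module.Finite R M] (m : M) :
    (∃ r : R, r ≠ 0 ∧ r • m = 0) ↔ ∀ h : M →ₗ[R] R, h m = 0 := by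
  constructor
  · rintro ⟨r, hr, hrm⟩ h
    have : r * h m = 0 := by rw [← smul_eq_mul, ← map_smul, hrm, map_zero]
    exact (mul_eq_zero.mp this).resolve_left hr
  · intro H
    by_contra hm
    push_neg at hm
    set S := nonZeroDivisors R
    let K := FractionRing R
    let f : M →ₗ[R] LocalizedModule S M := LocalizedModule.mkLinearMap S M
    have hfm : f m ≠ 0 := by
      intro hz
      rw [IsLocalizedModule.eq_zero_iff S f] at hz
      obtain ⟨⟨s, hs⟩, h0⟩ := hz
      exact hm s (nonZeroDivisors.ne_zero hs) h0
    obtain ⟨φ, hφ⟩ : ∃ φ : LocalizedModule S M →ₗ[K] K, φ (f m) ≠ 0 := by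
      by_contra h'
      push_neg at h'
      exact hfm ((Module.forall_dual_apply_eq_zero_iff K (f m)).mp h')
    let g : M →ₗ[R] K := (φ.restrictScalars R).comp f
    have hgm : g m ≠ 0 := hφ
    obtain ⟨n, v, hv⟩ := Module.Finite.exists_fin (R := R) (M := M)
    obtain ⟨b, hb⟩ := IsLocalization.exist_integer_multiples_of_finite S
      (fun i : Fin n => g (v i)) (S := K)
    let p : Submodule R K := LinearMap.range (Algebra.linearMap R K)
    let g' : M →ₗ[R] K := (b : R) • g
    have hall : ∀ x : M, g' x ∈ p := by
      have : Submodule.span R (Set.range v) ≤ Submodule.comap g' p := by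
        rw [Submodule.span_le]
        rintro _ ⟨i, rfl⟩
        obtain ⟨r, hr⟩ := hb i
        exact ⟨r, hr⟩
      intro x
      exact this (hv ▸ Submodule.mem_top)
    have hinj : Function.Injective (Algebra.linearMap R K) :=
      IsFractionRing.injective R K
    let e : R ≃ₗ[R] p := LinearEquiv.ofInjective (Algebra.linearMap R K) hinj
    let h : M →ₗ[R] R := e.symm.toLinearMap.comp (g'.codRestrict p hall)
    have hh : h m ≠ 0 := by
      intro h0
      have : g'.codRestrict p hall m = 0 := by
        apply e.symm.injective
        rw [LinearEquiv.map_zero]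
        exact h0
      have hg'm : g' m = 0 := congrArg Subtype.val this
      have : ((b : R) : R) • g m = 0 := hg'm
      rw [Algebra.smul_def] at this
      rcases mul_eq_zero.mp this with h1 | h1
      · exact (IsFractionRing.to_map_ne_zero_of_mem_nonZeroDivisors b.prop) h1
      · exact hgm h1
    exact hh (H h)
end

section
/- Let O be a Dedekind domain, M a finitely generated O-module, and m ∈ M an element that is not torsion over O. Then there are only finitely many nonzero prime ideals p of O such that m ∈ p • M. -/
/-!
Over the fraction field the image of `m` is nonzero, so some functional is nonzero on it;
clearing denominators gives `f : M →ₗ[O] O` with `f m ≠ 0`. If `m ∈ p • M` then `f m ∈ p`, and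
only finitely many nonzero primes of a Dedekind domain contain the nonzero element `f m`.
-/

open Module nonZeroDivisors

theorem Module.exists_dual_apply_ne_zero {R M : Type*} [CommRing R] [IsDomain R]
    [AddCommGroup M] [Module R M] [Module.FinitePresentation R M] {m : M}
    (hm : ∀ r : R, r • m = 0 → r = 0) : ∃ f : Dual R M, f m ≠ 0 := by
  let ι := LocalizedModule.mkLinearMap R⁰ M
  have hιm : ι m ≠ 0 := fun h ↦ by
    obtain ⟨s, hs⟩ := (IsLocalizedModule.eq_zero_iff R⁰ ι).mp h
    exact nonZeroDivisors.ne_zero s.2 (hm s hs)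
  obtain ⟨g, hg⟩ : ∃ g : Dual (FractionRing R) (LocalizedModule R⁰ M), g (ι m) ≠ 0 := by
    by_contra! h
    exact hιm ((Module.forall_dual_apply_eq_zero_iff _ _).mp h)
  obtain ⟨f, s, hf⟩ := FinitePresentation.exists_lift_of_isLocalizedModule R⁰
    (Algebra.linearMap R (FractionRing R)) ((g.restrictScalars R).comp ι)
  refine ⟨f, fun hfm ↦ ?_⟩
  have hfm_lift := congr($hf m)
  simp [hfm, Submonoid.smul_def, Algebra.smul_def, hg,
    IsFractionRing.to_map_ne_zero_of_mem_nonZeroDivisors s.2] at hfm_lift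

theorem Module.Dual.apply_mem_of_mem_smul_top {R M : Type*} [CommRing R] [AddCommGroup M]
    [Module R M] {I : Ideal R} (f : Dual R M) {m : M} (hm : m ∈ I • (⊤ : Submodule R M)) :
    f m ∈ I :=
  (Submodule.smul_le.mpr fun r hr n _ ↦ by simpa using I.mul_mem_right (f n) hr :
    I • (⊤ : Submodule R M) ≤ Submodule.comap f I) hm

theorem Ideal.finite_setOf_isPrime_le {R : Type*} [CommRing R] [IsDedekindDomain R]
    {I : Ideal R} (hI : I ≠ ⊥) : {p : Ideal R | p ≠ ⊥ ∧ p.IsPrime ∧ I ≤ p}.Finite := by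
  refine ((Ideal.finite_factors hI).image IsDedekindDomain.HeightOneSpectrum.asIdeal).subset ?_
  rintro p ⟨hp0, hp, hIp⟩
  exact ⟨⟨p, hp, hp0⟩, Ideal.dvd_iff_le.mpr hIp, rfl⟩

/-- Let `O` be a Dedekind domain, `M` a finitely generated `O`-module and `m ∈ M` an element
that is not torsion over `O`. Then there are only finitely many nonzero prime ideals `p` of
`O` such that `m ∈ p • M`. -/
theorem stmt_2 {O M : Type*} [CommRing O] [IsDedekindDomain O] [AddCommGroup M] [Module O M]
    [Module.Finite O M] (m : M) (hm : ∀ r : O, r • m = 0 → r = 0) :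
    {p : Ideal O | p ≠ ⊥ ∧ p.IsPrime ∧ m ∈ p • (⊤ : Submodule O M)}.Finite := by
  have := Module.finitePresentation_of_finite O M
  obtain ⟨f, hf⟩ := Module.exists_dual_apply_ne_zero hm
  refine (Ideal.finite_setOf_isPrime_le (I := Ideal.span {f m}) (by simpa)).subset ?_
  rintro p ⟨hp0, hp, hmp⟩
  exact ⟨hp0, hp, (Ideal.span_singleton_le_iff_mem p).mpr (f.apply_mem_of_mem_smul_top hmp)⟩
end
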